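/- arXiv:1812.04611 — 7 statements merged into one kernel-verified Lean document; each statement's English description precedes it below -/
import Mathlib

section
/- Given a bimatrix game (A, C + abᵀ), its set of Nash equilibria equals the projection onto X×Y of the intersection of the set N = {(λ,x,y) ∈ ℝ×X×Y : (x,y) is a Nash equilibrium of (A, C + 1λbᵀ)} with the hyperplane H = {(λ,x,y) : xᵀa = λ}. -/
open Matrix

def simplex (m : ℕ) : Set (Fin m → ℝ) := {x | (∀ i, 0 ≤ x i) ∧ ∑ i, x i = 1}

def isNash {m n : ℕ} (A B : Matrix (Fin m) (Fin n) ℝ)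
    (x : Fin m → ℝ) (y : Fin n → ℝ) : Prop :=
  x ∈ simplex m ∧ y ∈ simplex n ∧
  (∀ x' ∈ simplex m, x' ⬝ᵥ A.mulVec y ≤ x ⬝ᵥ A.mulVec y) ∧
  (∀ y' ∈ simplex n, x ⬝ᵥ B.mulVec y' ≤ x ⬝ᵥ B.mulVec y)

theorem stmt6 {m n : ℕ} (A C : Matrix (Fin m) (Fin n) ℝ)
    (a : Fin m → ℝ) (b : Fin n → ℝ) :
    {p : (Fin m → ℝ) × (Fin n → ℝ) | isNash A (C + vecMulVec a b) p.1 p.2} =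
      {p : (Fin m → ℝ) × (Fin n → ℝ) | ∃ lam : ℝ,
        isNash A (C + Matrix.of fun _ j => lam * b j) p.1 p.2 ∧ p.1 ⬝ᵥ a = lam} := by
  have key : ∀ (x : Fin m → ℝ) (y : Fin n → ℝ), (∑ i, x i) = 1 →
      x ⬝ᵥ (C + vecMulVec a b).mulVec y
        = x ⬝ᵥ (C + Matrix.of fun _ j => (x ⬝ᵥ a) * b j).mulVec y := by
    intro x y hx
    simp only [add_mulVec, dotProduct_add]
    congr 1
    have l1 : x ⬝ᵥ (vecMulVec a b).mulVec y = (x ⬝ᵥ a) * (b ⬝ᵥ y) := by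
      simp only [dotProduct, mulVec, vecMulVec_apply, Finset.sum_mul, Finset.mul_sum]
      rw [Finset.sum_comm]
      exact Finset.sum_congr rfl fun i _ => Finset.sum_congr rfl fun j _ => by ring
    have l2 : x ⬝ᵥ (Matrix.of fun _ j => (x ⬝ᵥ a) * b j).mulVec y
        = (∑ i, x i) * ((x ⬝ᵥ a) * (b ⬝ᵥ y)) := by
      generalize x ⬝ᵥ a = c
      simp only [dotProduct, mulVec, Matrix.of_apply, Finset.sum_mul, Finset.mul_sum]
      rw [Finset.sum_comm]
      exact Finset.sum_congr rfl fun i _ => Finset.sum_congr rfl fun j _ => by ring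
    rw [l1, l2, hx, one_mul]
  ext p
  obtain ⟨x, y⟩ := p
  simp only [Set.mem_setOf_eq]
  constructor
  · rintro ⟨hx, hy, h1, h2⟩
    refine ⟨x ⬝ᵥ a, ⟨hx, hy, h1, ?_⟩, rfl⟩
    intro y' hy'
    rw [← key x y' hx.2, ← key x y hx.2]
    exact h2 y' hy'
  · rintro ⟨lam, ⟨hx, hy, h1, h2⟩, hlam⟩
    refine ⟨hx, hy, h1, ?_⟩
    intro y' hy'
    rw [key x y' hx.2, key x y hx.2, hlam]
    exact h2 y' hy'
end

section
/- Let c ∈ ℝ^m. Then there exists a unique w ∈ ℝ such that Σ_{i=1}^m max(c_i − w, 0) = 1. -/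
open Matrix

theorem stmt12 {m : ℕ} (hm : 0 < m) (c : Fin m → ℝ) :
    ∃! w : ℝ, ∑ i, max (c i - w) 0 = 1 := by
  haveI : Nonempty (Fin m) := ⟨⟨0, hm⟩⟩
  set f : ℝ → ℝ := fun w => ∑ i, max (c i - w) 0 with hf
  have hcont : Continuous f := by
    apply continuous_finset_sum
    intro i _
    exact ((continuous_const.sub continuous_id).max continuous_const)
  have hstrict : ∀ w1 w2 : ℝ, w1 < w2 → 0 < f w2 → f w2 < f w1 := by
    intro w1 w2 h hpos
    obtain ⟨i, -, hi⟩ : ∃ i ∈ Finset.univ, 0 < max (c i - w2) 0 := by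
      by_contra hc
      push_neg at hc
      have : f w2 ≤ 0 := Finset.sum_nonpos fun i hi => hc i hi
      linarith
    have hi' : 0 < c i - w2 := by
      rcases le_or_gt (c i - w2) 0 with hle | hlt
      · rw [max_eq_right hle] at hi; linarith
      · exact hlt
    apply Finset.sum_lt_sum
    · intro j _; exact max_le_max (by linarith) le_rfl
    · refine ⟨i, Finset.mem_univ i, ?_⟩
      calc max (c i - w2) 0 = c i - w2 := max_eq_left hi'.le
        _ < c i - w1 := by linarith
        _ ≤ max (c i - w1) 0 := le_max_left _ _
  -- existence
  obtain ⟨i0, -, hi0⟩ := Finset.exists_max_image Finset.univ c Finset.univ_nonempty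
  set a : ℝ := c i0 with ha
  have hfa : f a = 0 := by
    apply Finset.sum_eq_zero
    intro i _
    exact max_eq_right (by have := hi0 i (Finset.mem_univ i); linarith)
  have hfb : 1 ≤ f (a - 1) := by
    calc (1 : ℝ) = max (c i0 - (a - 1)) 0 := by rw [ha]; simp
      _ ≤ f (a - 1) := Finset.single_le_sum (f := fun i => max (c i - (a - 1)) 0)
          (fun i _ => le_max_right _ _) (Finset.mem_univ i0)
  obtain ⟨w, hw, hfw⟩ := intermediate_value_Icc' (by linarith : a - 1 ≤ a)
    hcont.continuousOn (by rw [hfa]; exact ⟨zero_le_one, hfb⟩)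
  refine ⟨w, hfw, ?_⟩
  intro w' hw'
  change f w' = 1 at hw'
  by_contra hne
  rcases lt_or_gt_of_ne hne with h | h
  · have := hstrict w' w h (by rw [hfw]; norm_num)
    rw [hfw, hw'] at this; linarith
  · have := hstrict w w' h (by rw [hw']; norm_num)
    rw [hfw, hw'] at this; linarith
end

section
/- Given c ∈ ℝ^m and d ∈ ℝ^n, there exist unique x ∈ X, y ∈ Y, p ∈ ℝ^m, q ∈ ℝ^n such that c = p + x, d = q + y, and for all i: x_i = 0 or p_i = max_k p_k, and for all j: y_j = 0 or q_j = max_l q_l. -/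
open Matrix

private lemma level_unique {m : ℕ} (c : Fin m → ℝ) {u v : ℝ}
    (hu : ∑ i, max (c i - u) 0 = 1) (hv : ∑ i, max (c i - v) 0 = 1) : u = v := by
  by_contra hne
  wlog h : u < v generalizing u v
  · exact this hv hu (Ne.symm hne) (lt_of_le_of_ne (not_lt.mp h) (Ne.symm hne))
  obtain ⟨i, -, hi⟩ : ∃ i ∈ Finset.univ, max (c i - v) 0 ≠ 0 := by
    by_contra hall
    push_neg at hall
    rw [Finset.sum_eq_zero (fun i hi => hall i hi)] at hv
    norm_num at hv
  have hi' : 0 < max (c i - v) 0 := lt_of_le_of_ne (le_max_right _ _) (Ne.symm hi)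
  have hci : v < c i := by
    by_contra hcon
    push_neg at hcon
    have : max (c i - v) 0 = 0 := max_eq_right (by linarith)
    linarith
  have hlt : (∑ k, max (c k - v) 0) < ∑ k, max (c k - u) 0 := by
    apply Finset.sum_lt_sum (fun k _ => max_le_max (by linarith [h.le]) le_rfl)
    refine ⟨i, Finset.mem_univ i, ?_⟩
    have h1 : max (c i - v) 0 = c i - v := max_eq_left (by linarith)
    have h2 : c i - u ≤ max (c i - u) 0 := le_max_left _ _
    linarith
  linarith

private lemma key {m : ℕ} (hm : 0 < m) (c : Fin m → ℝ) :
    ∃! t : (Fin m → ℝ) × (Fin m → ℝ),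
      t.1 ∈ simplex m ∧ c = t.2 + t.1 ∧ (∀ i, t.1 i = 0 ∨ ∀ k, t.2 k ≤ t.2 i) := by
  have hne : Nonempty (Fin m) := ⟨⟨0, hm⟩⟩
  have huniv : (Finset.univ : Finset (Fin m)).Nonempty := Finset.univ_nonempty
  -- find the water level u
  set g : ℝ → ℝ := fun u => ∑ i, max (c i - u) 0 with hg
  have hcont : Continuous g := by
    apply continuous_finset_sum
    intro i _
    exact (continuous_const.sub continuous_id).max continuous_const
  set a : ℝ := Finset.univ.inf' huniv c - 1 with ha
  set b : ℝ := Finset.univ.sup' huniv c with hb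
  have hab : a ≤ b := by
    have h1 : Finset.univ.inf' huniv c ≤ Finset.univ.sup' huniv c :=
      le_trans (Finset.inf'_le _ (Finset.mem_univ (Classical.arbitrary _)))
        (Finset.le_sup' _ (Finset.mem_univ (Classical.arbitrary _)))
    simp only [ha]; linarith
  have hgb : g b = 0 := by
    apply Finset.sum_eq_zero
    intro i _
    exact max_eq_right (by linarith [Finset.le_sup' c (Finset.mem_univ i)])
  have hga : 1 ≤ g a := by
    have h1 : ∀ i ∈ Finset.univ, (1 : ℝ) ≤ max (c i - a) 0 := by
      intro i _
      have := Finset.inf'_le c (Finset.mem_univ i)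
      calc (1:ℝ) ≤ c i - a := by simp only [ha]; linarith
        _ ≤ max (c i - a) 0 := le_max_left _ _
    calc (1:ℝ) ≤ (m : ℝ) := by exact_mod_cast hm
      _ = ∑ _i : Fin m, (1:ℝ) := by simp
      _ ≤ g a := Finset.sum_le_sum h1
  obtain ⟨u, hu_mem, hu⟩ : ∃ u ∈ Set.Icc a b, g u = 1 := by
    have h1 : (1:ℝ) ∈ Set.Icc (g b) (g a) := ⟨by linarith, hga⟩
    have := intermediate_value_Icc' hab hcont.continuousOn h1
    obtain ⟨u, hu1, hu2⟩ := this
    exact ⟨u, hu1, hu2⟩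
  set x : Fin m → ℝ := fun i => max (c i - u) 0 with hx
  set p : Fin m → ℝ := fun i => c i - x i with hp
  have hple : ∀ k, p k ≤ u := by
    intro k
    simp only [hp, hx]
    rcases le_total (c k - u) 0 with h | h
    · rw [max_eq_right h]; linarith
    · rw [max_eq_left h]; linarith
  refine ⟨(x, p), ⟨⟨fun i => le_max_right _ _, hu⟩, ?_, ?_⟩, ?_⟩
  · funext i
    simp [hp]
  · intro i
    rcases eq_or_lt_of_le (le_max_right (c i - u) 0 : (0:ℝ) ≤ x i) with h | h
    · exact Or.inl h.symm
    · right
      intro k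
      have hxi : x i = c i - u := max_eq_left (by
        by_contra hcon
        push_neg at hcon
        have : x i = 0 := max_eq_right hcon.le
        linarith)
      have hpi : p i = u := by simp [hp, hxi]
      show p k ≤ p i
      rw [hpi]; exact hple k
  · -- uniqueness
    rintro ⟨x', p'⟩ ⟨⟨hpos, hsum⟩, hc, hcond⟩
    dsimp only at hpos hsum hc hcond
    have hcp : ∀ i, c i = p' i + x' i := fun i => congrFun hc i
    set M : ℝ := Finset.univ.sup' huniv p' with hM
    have hxM : ∀ i, x' i = max (c i - M) 0 := by
      intro i
      rcases hcond i with h0 | hmax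
      · rw [h0]
        have : c i = p' i := by have := hcp i; linarith [h0]
        have hle : c i ≤ M := this ▸ Finset.le_sup' p' (Finset.mem_univ i)
        exact (max_eq_right (by linarith)).symm
      · have hpi : p' i = M := le_antisymm (Finset.le_sup' p' (Finset.mem_univ i))
          (Finset.sup'_le _ _ fun k _ => hmax k)
        have : x' i = c i - M := by have := hcp i; linarith
        rw [this]
        exact (max_eq_left (by linarith [hpos i])).symm
    have hsumM : ∑ i, max (c i - M) 0 = 1 := by
      rw [← Finset.sum_congr rfl fun i _ => (hxM i)]
      exact hsum
    have hMu : M = u := level_unique c hsumM hu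
    have hxx : x' = x := by
      funext i; rw [hxM i, hMu]
    have hpp : p' = p := by
      funext i
      have := hcp i
      have := congrFun hxx i
      simp only [hp]
      linarith
    simp [hxx, hpp]

theorem stmt13 {m n : ℕ} (hm : 0 < m) (hn : 0 < n) (c : Fin m → ℝ) (d : Fin n → ℝ) :
    ∃! t : (Fin m → ℝ) × (Fin n → ℝ) × (Fin m → ℝ) × (Fin n → ℝ),
      t.1 ∈ simplex m ∧ t.2.1 ∈ simplex n ∧
      c = t.2.2.1 + t.1 ∧ d = t.2.2.2 + t.2.1 ∧
      (∀ i, t.1 i = 0 ∨ ∀ k, t.2.2.1 k ≤ t.2.2.1 i) ∧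
      (∀ j, t.2.1 j = 0 ∨ ∀ l, t.2.2.2 l ≤ t.2.2.2 j) := by
  obtain ⟨⟨x, p⟩, ⟨hx, hc, hxp⟩, hux⟩ := key hm c
  obtain ⟨⟨y, q⟩, ⟨hy, hd, hyq⟩, huy⟩ := key hn d
  refine ⟨(x, y, p, q), ⟨hx, hy, hc, hd, hxp, hyq⟩, ?_⟩
  rintro ⟨x', y', p', q'⟩ ⟨h1, h2, h3, h4, h5, h6⟩
  have e1 := hux (x', p') ⟨h1, h3, h5⟩
  have e2 := huy (y', q') ⟨h2, h4, h6⟩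
  simp only [Prod.mk.injEq] at e1 e2 ⊢
  exact ⟨e1.1, e2.1, e1.2, e2.2⟩
end

section
/- Let p > 2 and let A be the n×n matrix with a_{ij} = 2p^{i+j} if j > i, p^{2i} if j = i, and 0 if j < i, and let B = Aᵀ. Then for every mixed strategy y with support S and every row i ∉ S, row i is not a best response to y; consequently in every Nash equilibrium (x,y) of (A,B), the supports of x and y are equal. -/
open Matrix

noncomputable def expoA (n : ℕ) (p : ℝ) : Matrix (Fin n) (Fin n) ℝ :=
  Matrix.of fun i j =>
    if (i : ℕ) < (j : ℕ) then 2 * p ^ ((i : ℕ) + 1 + ((j : ℕ) + 1))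
    else if i = j then p ^ (2 * ((i : ℕ) + 1)) else 0

lemma expoA_of_lt {n : ℕ} {p : ℝ} {i j : Fin n} (h : (i:ℕ) < (j:ℕ)) :
    expoA n p i j = 2 * p ^ ((i:ℕ) + 1 + ((j:ℕ) + 1)) := by
  unfold expoA
  rw [Matrix.of_apply, if_pos h]

lemma expoA_diag {n : ℕ} {p : ℝ} (i : Fin n) :
    expoA n p i i = p ^ (2 * ((i:ℕ) + 1)) := by
  unfold expoA
  rw [Matrix.of_apply, if_neg (lt_irrefl _), if_pos rfl]

lemma expoA_of_gt {n : ℕ} {p : ℝ} {i j : Fin n} (h : (j:ℕ) < (i:ℕ)) :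
    expoA n p i j = 0 := by
  unfold expoA
  rw [Matrix.of_apply, if_neg (by omega), if_neg (fun he => by rw [he] at h; omega)]

lemma expoA_nonneg {n : ℕ} {p : ℝ} (hp : 0 < p) (i j : Fin n) : 0 ≤ expoA n p i j := by
  unfold expoA
  rw [Matrix.of_apply]
  split_ifs <;> positivity

lemma mulVec_eq {n : ℕ} (A : Matrix (Fin n) (Fin n) ℝ) (y : Fin n → ℝ) (k : Fin n) :
    A.mulVec y k = ∑ l, A k l * y l := rfl

lemma key_s16 {n : ℕ} {p : ℝ} (hp : 2 < p) {y : Fin n → ℝ} (hy : y ∈ simplex n)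
    {i : Fin n} (hi : y i = 0) :
    ∃ k, (expoA n p).mulVec y i < (expoA n p).mulVec y k := by
  have hp0 : (0:ℝ) < p := by linarith
  have hp1 : (1:ℝ) ≤ p := by linarith
  have hnn := hy.1
  have hex : ∃ j, 0 < y j := by
    by_contra h
    push_neg at h
    have hz : ∀ j, y j = 0 := fun j => le_antisymm (h j) (hnn j)
    have hs := hy.2
    simp [hz] at hs
  by_cases hcase : ∃ j : Fin n, (i:ℕ) < (j:ℕ) ∧ 0 < y j
  · set s : Finset (Fin n) := Finset.univ.filter (fun j => (i:ℕ) < (j:ℕ) ∧ 0 < y j) with hsdef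
    have hsne : s.Nonempty := by
      obtain ⟨j, hj1, hj2⟩ := hcase
      exact ⟨j, Finset.mem_filter.mpr ⟨Finset.mem_univ _, hj1, hj2⟩⟩
    set j := s.min' hsne with hjdef
    have hjmem : j ∈ s := s.min'_mem hsne
    have hij : (i:ℕ) < (j:ℕ) := (Finset.mem_filter.mp hjmem).2.1
    have hyj : 0 < y j := (Finset.mem_filter.mp hjmem).2.2
    have hmin : ∀ l : Fin n, (i:ℕ) < (l:ℕ) → 0 < y l → (j:ℕ) ≤ (l:ℕ) := by
      intro l h1 h2
      exact s.min'_le l (Finset.mem_filter.mpr ⟨Finset.mem_univ _, h1, h2⟩)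
    refine ⟨j, ?_⟩
    rw [mulVec_eq, mulVec_eq]
    have hstrict : expoA n p i j * y j < expoA n p j j * y j := by
      rw [expoA_of_lt hij, expoA_diag]
      apply mul_lt_mul_of_pos_right _ hyj
      have he : (i:ℕ) + 1 + ((j:ℕ) + 1) + 1 ≤ 2 * ((j:ℕ) + 1) := by omega
      calc 2 * p ^ ((i:ℕ) + 1 + ((j:ℕ) + 1))
          < p * p ^ ((i:ℕ) + 1 + ((j:ℕ) + 1)) :=
            mul_lt_mul_of_pos_right hp (pow_pos hp0 _)
        _ = p ^ ((i:ℕ) + 1 + ((j:ℕ) + 1) + 1) := by ring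
        _ ≤ p ^ (2 * ((j:ℕ) + 1)) := pow_le_pow_right₀ hp1 he
    apply Finset.sum_lt_sum
    · intro l _
      by_cases hyl : y l = 0
      · simp [hyl]
      have hyl' : 0 < y l := lt_of_le_of_ne (hnn l) (Ne.symm hyl)
      by_cases hil : (i:ℕ) < (l:ℕ)
      · have hjl : (j:ℕ) ≤ (l:ℕ) := hmin l hil hyl'
        rcases eq_or_lt_of_le hjl with heq | hlt
        · have hje : j = l := Fin.ext heq
          subst hje
          exact le_of_lt hstrict
        · rw [expoA_of_lt hil, expoA_of_lt hlt]
          apply mul_le_mul_of_nonneg_right _ (hnn l)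
          have hpow := pow_le_pow_right₀ hp1
            (by omega : (i:ℕ)+1+((l:ℕ)+1) ≤ (j:ℕ)+1+((l:ℕ)+1))
          linarith
      · have hli : (l:ℕ) < (i:ℕ) := by
          rcases lt_or_eq_of_le (not_lt.mp hil) with h | h
          · exact h
          · exfalso
            have hle : l = i := Fin.ext h
            rw [hle, hi] at hyl'
            exact lt_irrefl _ hyl'
        rw [expoA_of_gt hli, expoA_of_gt (hli.trans hij)]
    · exact ⟨j, Finset.mem_univ j, hstrict⟩
  · push_neg at hcase
    obtain ⟨j, hyj⟩ := hex
    refine ⟨j, ?_⟩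
    rw [mulVec_eq, mulVec_eq]
    have hzero : ∑ l, expoA n p i l * y l = 0 := by
      apply Finset.sum_eq_zero
      intro l _
      by_cases hil : (i:ℕ) < (l:ℕ)
      · have hyl : y l = 0 := le_antisymm (hcase l hil) (hnn l)
        simp [hyl]
      · by_cases heq : i = l
        · rw [← heq, hi, mul_zero]
        · have hli : (l:ℕ) < (i:ℕ) := by
            rcases lt_or_eq_of_le (not_lt.mp hil) with h | h
            · exact h
            · exact absurd (Fin.ext h : l = i) (fun he => heq he.symm)
          rw [expoA_of_gt hli, zero_mul]
    rw [hzero]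
    apply Finset.sum_pos'
    · intro l _
      exact mul_nonneg (expoA_nonneg hp0 j l) (hnn l)
    · refine ⟨j, Finset.mem_univ j, ?_⟩
      rw [expoA_diag]
      positivity

lemma br {n : ℕ} (v z : Fin n → ℝ) (hz : z ∈ simplex n)
    (h : ∀ z' ∈ simplex n, z' ⬝ᵥ v ≤ z ⬝ᵥ v) {i : Fin n} (hi : 0 < z i) :
    ∀ k, v k ≤ v i := by
  have hk : ∀ k, v k ≤ z ⬝ᵥ v := by
    intro k
    have hmem : (Pi.single k 1 : Fin n → ℝ) ∈ simplex n := by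
      constructor
      · intro l
        by_cases hl : l = k <;> simp [Pi.single_apply, hl]
      · simp [Pi.single_apply]
    have hh := h _ hmem
    simpa [dotProduct, Pi.single_apply] using hh
  have hvi : z ⬝ᵥ v ≤ v i := by
    by_contra hcon
    push_neg at hcon
    have hlt : ∑ k, z k * v k < ∑ k, z k * (z ⬝ᵥ v) := by
      apply Finset.sum_lt_sum
      · intro l _
        exact mul_le_mul_of_nonneg_left (hk l) (hz.1 l)
      · exact ⟨i, Finset.mem_univ i, mul_lt_mul_of_pos_left hcon hi⟩
    have h1 : ∑ k, z k * (z ⬝ᵥ v) = z ⬝ᵥ v := by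
      rw [← Finset.sum_mul, hz.2, one_mul]
    rw [h1] at hlt
    exact lt_irrefl (z ⬝ᵥ v) hlt
  intro k
  exact (hk k).trans hvi

lemma dot_trans {n : ℕ} (A : Matrix (Fin n) (Fin n) ℝ) (x w : Fin n → ℝ) :
    x ⬝ᵥ Aᵀ.mulVec w = w ⬝ᵥ A.mulVec x := by
  rw [Matrix.mulVec_transpose, dotProduct_comm, ← Matrix.dotProduct_mulVec]

theorem stmt16 {n : ℕ} (p : ℝ) (hp : 2 < p) :
    (∀ y ∈ simplex n, ∀ i, y i = 0 →
      ¬ (∀ k, (expoA n p).mulVec y k ≤ (expoA n p).mulVec y i)) ∧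
    (∀ (x y : Fin n → ℝ), isNash (expoA n p) (expoA n p)ᵀ x y →
      {i | 0 < x i} = {j | 0 < y j}) := by
  constructor
  · intro y hy i hi hcon
    obtain ⟨k, hk⟩ := key_s16 hp hy hi
    exact absurd (hcon k) (not_le.mpr hk)
  · intro x y hN
    obtain ⟨hx, hy, h1, h2⟩ := hN
    ext i
    simp only [Set.mem_setOf_eq]
    constructor
    · intro hxi
      have hbr : ∀ k, (expoA n p).mulVec y k ≤ (expoA n p).mulVec y i :=
        br ((expoA n p).mulVec y) x hx h1 hxi
      by_contra hcon
      have hyi : y i = 0 := le_antisymm (not_lt.mp hcon) (hy.1 i)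
      obtain ⟨k, hk⟩ := key_s16 hp hy hyi
      exact absurd (hbr k) (not_le.mpr hk)
    · intro hyi
      have h2' : ∀ y' ∈ simplex n, y' ⬝ᵥ (expoA n p).mulVec x ≤ y ⬝ᵥ (expoA n p).mulVec x := by
        intro y' hy'
        have hh := h2 y' hy'
        rwa [dot_trans, dot_trans] at hh
      have hbr : ∀ k, (expoA n p).mulVec x k ≤ (expoA n p).mulVec x i :=
        br ((expoA n p).mulVec x) y hy h2' hyi
      by_contra hcon
      have hxi : x i = 0 := le_antisymm (not_lt.mp hcon) (hx.1 i)
      obtain ⟨k, hk⟩ := key_s16 hp hx hxi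
      exact absurd (hbr k) (not_le.mpr hk)
end

section
/- Let p > 2 and let A be the n×n matrix with a_{ij} = 2p^{i+j} if j > i, p^{2i} if j = i, and 0 if j < i. Then for every nonempty subset S of {1,…,n} there exists a mixed strategy y with support exactly S such that (y,y) is a Nash equilibrium of (A, Aᵀ). Consequently the game (A, Aᵀ) has at least 2^n − 1 Nash equilibria. -/
open Matrix

/-!
For a symmetric game `(A, Aᵀ)`, a mixed strategy `y` with `A y ≤ c` everywhere and `A y = c`
on the support of `y` is a symmetric equilibrium. So it suffices to find, for each nonempty
`S`, a nonnegative `w` supported exactly on `S` with `A w = 1` on `S` and `A w ≤ 1` off `S`,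
and normalize it. Writing `w j = p⁻ʲ⁻¹ (U j - U (j + 1))` makes
`(A w) i = pⁱ⁺¹ (U i + U (i + 1))`, so these conditions determine `U` by a backward recursion.
Then `0 ≤ U j ≤ p⁻ʲ⁻¹`, which gives
`w > 0` on `S` and `(A w) i ≤ 2 / p < 1` off `S` precisely because `p > 2`.
Distinct supports give distinct equilibria, one for each of the `2 ^ n - 1` nonempty `S`.
-/

section SymmetricGame

variable {n : ℕ}

theorem dotProduct_le_of_mem_simplex {x v : Fin n → ℝ} (hx : x ∈ simplex n) {c : ℝ}
    (hv : ∀ i, v i ≤ c) : x ⬝ᵥ v ≤ c :=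
  calc x ⬝ᵥ v ≤ ∑ i, x i * c :=
        Finset.sum_le_sum fun i _ => mul_le_mul_of_nonneg_left (hv i) (hx.1 i)
    _ = c := by rw [← Finset.sum_mul, hx.2, one_mul]

theorem dotProduct_eq_of_mem_simplex {x v : Fin n → ℝ} (hx : x ∈ simplex n) {c : ℝ}
    (hv : ∀ i, 0 < x i → v i = c) : x ⬝ᵥ v = c :=
  calc x ⬝ᵥ v = ∑ i, x i * c := by
        refine Finset.sum_congr rfl fun i _ => ?_
        rcases (hx.1 i).eq_or_lt with h | h
        · simp [← h]
        · rw [hv i h]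
    _ = c := by rw [← Finset.sum_mul, hx.2, one_mul]

theorem isNash_transpose_of_mulVec_le {A : Matrix (Fin n) (Fin n) ℝ} {y : Fin n → ℝ}
    (hy : y ∈ simplex n) {c : ℝ} (hle : ∀ i, (A *ᵥ y) i ≤ c)
    (heq : ∀ i, 0 < y i → (A *ᵥ y) i = c) : isNash A Aᵀ y y := by
  have hval : y ⬝ᵥ A *ᵥ y = c := dotProduct_eq_of_mem_simplex hy heq
  have hswap : ∀ v, y ⬝ᵥ Aᵀ *ᵥ v = v ⬝ᵥ A *ᵥ y := fun v => by
    rw [dotProduct_mulVec, vecMul_transpose, dotProduct_comm]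
  refine ⟨hy, hy, fun x hx => ?_, fun x hx => ?_⟩
  · rw [hval]
    exact dotProduct_le_of_mem_simplex hx hle
  · rw [hswap, hswap, hval]
    exact dotProduct_le_of_mem_simplex hx hle

theorem exists_isNash_of_mulVec_le_one {A : Matrix (Fin n) (Fin n) ℝ} {w : Fin n → ℝ}
    (hw : ∀ i, 0 ≤ w i) (hpos : ∃ i, 0 < w i) (hle : ∀ i, (A *ᵥ w) i ≤ 1)
    (heq : ∀ i, 0 < w i → (A *ᵥ w) i = 1) :
    ∃ y ∈ simplex n, {j | 0 < y j} = {j | 0 < w j} ∧ isNash A Aᵀ y y := by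
  obtain ⟨i₀, hi₀⟩ := hpos
  set c := ∑ i, w i
  have hc : 0 < c := hi₀.trans_le (Finset.single_le_sum (fun i _ => hw i) (Finset.mem_univ i₀))
  have hy : c⁻¹ • w ∈ simplex n :=
    ⟨fun i => mul_nonneg (inv_nonneg.2 hc.le) (hw i), by
      simp only [Pi.smul_apply, smul_eq_mul, ← Finset.mul_sum]
      exact inv_mul_cancel₀ hc.ne'⟩
  have hsupp (j : Fin n) : 0 < (c⁻¹ • w) j ↔ 0 < w j := by
    simp [mul_pos_iff_of_pos_left (inv_pos.2 hc)]
  refine ⟨c⁻¹ • w, hy, Set.ext hsupp,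
    isNash_transpose_of_mulVec_le hy (c := c⁻¹) (fun i => ?_) fun i hi => ?_⟩
  · simpa [mulVec_smul] using mul_le_mul_of_nonneg_left (hle i) (inv_nonneg.2 hc.le)
  · simp [mulVec_smul, heq i ((hsupp i).1 hi)]

theorem exists_finset_isNash_card_ge {A B : Matrix (Fin n) (Fin n) ℝ}
    (h : ∀ S : Finset (Fin n), S.Nonempty →
      ∃ y : Fin n → ℝ, {j | 0 < y j} = ↑S ∧ isNash A B y y) :
    ∃ T : Finset ((Fin n → ℝ) × (Fin n → ℝ)),
      (∀ e ∈ T, isNash A B e.1 e.2) ∧ 2 ^ n - 1 ≤ T.card := by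
  choose f hf using fun S : {S : Finset (Fin n) // S.Nonempty} => h S S.2
  have hinj : Function.Injective fun S => (f S, f S) := fun S S' hSS' => by
    have hfS : f S = f S' := congrArg Prod.fst hSS'
    exact Subtype.ext <| Finset.coe_injective <| (hf S).1.symm.trans (hfS ▸ (hf S').1)
  refine ⟨Finset.univ.image fun S => (f S, f S), ?_, ?_⟩
  · simp only [Finset.mem_image, Finset.mem_univ, true_and]
    rintro _ ⟨S, rfl⟩
    exact (hf S).2
  · rw [Finset.card_image_of_injective _ hinj, Finset.card_univ]
    simp only [Finset.nonempty_iff_ne_empty, ne_eq, Fintype.card_subtype_compl,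
      Fintype.card_subtype_eq, Fintype.card_finset, Fintype.card_fin, le_refl]

end SymmetricGame

section Construction

variable {n : ℕ} (p : ℝ) (S : Finset (Fin n))

/-- The tail sum `U j = ∑_{k ≥ j} p ^ (k + 1) * equalizerWeights p S k`. -/
noncomputable def equalizerTail (j : ℕ) : ℝ :=
  if h : j < n then
    if (⟨j, h⟩ : Fin n) ∈ S then p⁻¹ ^ (j + 1) - equalizerTail (j + 1)
    else equalizerTail (j + 1)
  else 0
termination_by n - j

noncomputable def equalizerWeights (j : Fin n) : ℝ :=
  p⁻¹ ^ ((j : ℕ) + 1) * (equalizerTail p S j - equalizerTail p S (j + 1))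

variable {p S}

theorem equalizerTail_of_le {j : ℕ} (h : n ≤ j) : equalizerTail p S j = 0 := by
  rw [equalizerTail, dif_neg (by omega)]

theorem equalizerTail_of_mem {i : Fin n} (hi : i ∈ S) :
    equalizerTail p S i = p⁻¹ ^ ((i : ℕ) + 1) - equalizerTail p S (i + 1) := by
  rw [equalizerTail, dif_pos i.isLt, if_pos hi]

theorem equalizerTail_of_notMem {i : Fin n} (hi : i ∉ S) :
    equalizerTail p S i = equalizerTail p S (i + 1) := by
  rw [equalizerTail, dif_pos i.isLt, if_neg hi]

theorem equalizerTail_mem_Icc (hp : 1 ≤ p) (j : ℕ) :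
    equalizerTail p S j ∈ Set.Icc 0 (p⁻¹ ^ (j + 1)) := by
  have hq : p⁻¹ ^ (j + 1 + 1) ≤ p⁻¹ ^ (j + 1) :=
    pow_le_pow_of_le_one (by positivity) (inv_le_one_of_one_le₀ hp) (Nat.le_succ _)
  by_cases h : j < n
  · obtain ⟨h₀, h₁⟩ := equalizerTail_mem_Icc hp (j + 1)
    by_cases hj : (⟨j, h⟩ : Fin n) ∈ S
    · rw [equalizerTail_of_mem hj]
      constructor <;> dsimp only <;> linarith
    · rw [equalizerTail_of_notMem hj]
      exact ⟨h₀, h₁.trans hq⟩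
  · rw [equalizerTail_of_le (not_lt.1 h)]
    exact ⟨le_rfl, by positivity⟩
termination_by n - j

theorem sum_Ico_equalizerTail_sub {a : ℕ} (ha : a ≤ n) :
    ∑ j ∈ Finset.Ico a n, (equalizerTail p S j - equalizerTail p S (j + 1)) =
      equalizerTail p S a := by
  have htel := Finset.sum_Ico_sub (equalizerTail p S) ha
  rw [equalizerTail_of_le le_rfl, zero_sub] at htel
  rw [← neg_neg (equalizerTail p S a), ← htel, ← Finset.sum_neg_distrib]
  simp only [neg_sub]

theorem expoA_mulVec_equalizerWeights (hp : p ≠ 0) (i : Fin n) :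
    (expoA n p *ᵥ equalizerWeights p S) i =
      p ^ ((i : ℕ) + 1) * (equalizerTail p S i + equalizerTail p S (i + 1)) := by
  set z : ℕ → ℝ := fun j => equalizerTail p S j - equalizerTail p S (j + 1)
  set g : ℕ → ℝ := fun j =>
    if (i : ℕ) < j then 2 * p ^ ((i : ℕ) + 1) * z j
    else if j = i then p ^ ((i : ℕ) + 1) * z j else 0
  have hentry (j : Fin n) : expoA n p i j * equalizerWeights p S j = g j := by
    simp only [expoA, equalizerWeights, of_apply, g, z, Fin.ext_iff, eq_comm (a := (j : ℕ))]
    split_ifs with hij hij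
    · rw [pow_add, inv_pow]; field_simp
    · rw [hij, two_mul, pow_add, inv_pow]; field_simp
    · ring
  calc (expoA n p *ᵥ equalizerWeights p S) i = ∑ j ∈ Finset.range n, g j := by
        simp only [mulVec, dotProduct, hentry]
        exact Fin.sum_univ_eq_sum_range g n
    _ = ∑ j ∈ Finset.Ico (i : ℕ) n, g j := by
        rw [Finset.range_eq_Ico, ← Finset.sum_Ico_consecutive _ (Nat.zero_le i) i.isLt.le,
          Finset.sum_eq_zero, zero_add]
        intro j hj
        simp only [Finset.mem_Ico] at hj
        simp only [g, if_neg (show ¬ (i : ℕ) < j by omega), if_neg (show j ≠ i by omega)]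
    _ = g i + ∑ j ∈ Finset.Ico ((i : ℕ) + 1) n, 2 * p ^ ((i : ℕ) + 1) * z j := by
        rw [Finset.sum_eq_sum_Ico_succ_bot i.isLt]
        congr 1
        refine Finset.sum_congr rfl fun j hj => if_pos ?_
        simp only [Finset.mem_Ico] at hj
        omega
    _ = _ := by
        rw [← Finset.mul_sum, sum_Ico_equalizerTail_sub i.isLt]
        simp only [g, z, lt_irrefl, if_false, if_true]
        ring

theorem equalizerWeights_eq_zero {i : Fin n} (hi : i ∉ S) : equalizerWeights p S i = 0 := by
  rw [equalizerWeights, equalizerTail_of_notMem hi, sub_self, mul_zero]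

theorem equalizerWeights_pos (hp : 2 < p) {i : Fin n} (hi : i ∈ S) :
    0 < equalizerWeights p S i := by
  have hq : 0 < p⁻¹ ^ ((i : ℕ) + 1) := by positivity
  have h2q : 2 * p⁻¹ < 1 := by
    rw [← div_eq_mul_inv, div_lt_one (by linarith)]
    exact hp
  have hU := (equalizerTail_mem_Icc (p := p) (S := S) (by linarith) ((i : ℕ) + 1)).2
  rw [pow_succ] at hU
  rw [equalizerWeights, equalizerTail_of_mem hi]
  refine mul_pos hq ?_
  nlinarith

theorem equalizerWeights_nonneg (hp : 2 < p) (i : Fin n) : 0 ≤ equalizerWeights p S i := by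
  by_cases hi : i ∈ S
  · exact (equalizerWeights_pos hp hi).le
  · rw [equalizerWeights_eq_zero hi]

theorem equalizerWeights_pos_iff (hp : 2 < p) {i : Fin n} :
    0 < equalizerWeights p S i ↔ i ∈ S :=
  ⟨fun hw => by_contra fun hi => hw.ne' (equalizerWeights_eq_zero hi), equalizerWeights_pos hp⟩

theorem expoA_mulVec_equalizerWeights_of_mem (hp : p ≠ 0) {i : Fin n} (hi : i ∈ S) :
    (expoA n p *ᵥ equalizerWeights p S) i = 1 := by
  rw [expoA_mulVec_equalizerWeights hp, equalizerTail_of_mem hi, sub_add_cancel, ← mul_pow,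
    mul_inv_cancel₀ hp, one_pow]

theorem expoA_mulVec_equalizerWeights_le_one (hp : 2 ≤ p) (i : Fin n) :
    (expoA n p *ᵥ equalizerWeights p S) i ≤ 1 := by
  have hp₀ : p ≠ 0 := by positivity
  by_cases hi : i ∈ S
  · exact (expoA_mulVec_equalizerWeights_of_mem hp₀ hi).le
  have hU := (equalizerTail_mem_Icc (p := p) (S := S) (by linarith) ((i : ℕ) + 1)).2
  calc (expoA n p *ᵥ equalizerWeights p S) i
      = 2 * (p ^ ((i : ℕ) + 1) * equalizerTail p S (i + 1)) := by
        rw [expoA_mulVec_equalizerWeights hp₀, equalizerTail_of_notMem hi]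
        ring
    _ ≤ 2 * (p ^ ((i : ℕ) + 1) * p⁻¹ ^ ((i : ℕ) + 1 + 1)) := by gcongr
    _ = 2 / p := by
        rw [inv_pow]
        field_simp
        ring
    _ ≤ 1 := (div_le_one (by positivity)).2 hp

end Construction

theorem stmt17 {n : ℕ} (p : ℝ) (hp : 2 < p) :
    (∀ S : Finset (Fin n), S.Nonempty →
      ∃ y ∈ simplex n, {j | 0 < y j} = ↑S ∧ isNash (expoA n p) (expoA n p)ᵀ y y) ∧
    ∃ T : Finset ((Fin n → ℝ) × (Fin n → ℝ)),
      (∀ e ∈ T, isNash (expoA n p) (expoA n p)ᵀ e.1 e.2) ∧ 2 ^ n - 1 ≤ T.card := by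
  have hequilibria (S : Finset (Fin n)) (hS : S.Nonempty) :
      ∃ y ∈ simplex n, {j | 0 < y j} = ↑S ∧ isNash (expoA n p) (expoA n p)ᵀ y y := by
    obtain ⟨i, hi⟩ := hS
    obtain ⟨y, hy, hsupp, hnash⟩ := exists_isNash_of_mulVec_le_one
      (equalizerWeights_nonneg hp) ⟨i, equalizerWeights_pos hp hi⟩
      (expoA_mulVec_equalizerWeights_le_one hp.le) fun j hj =>
        expoA_mulVec_equalizerWeights_of_mem (by positivity) ((equalizerWeights_pos_iff hp).1 hj)
    exact ⟨y, hy, hsupp.trans (Set.ext fun _ => equalizerWeights_pos_iff hp), hnash⟩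
  refine ⟨hequilibria, exists_finset_isNash_card_ge fun S hS => ?_⟩
  obtain ⟨y, -, hsupp, hnash⟩ := hequilibria S hS
  exact ⟨y, hsupp, hnash⟩
end

section
/- Let M ∈ ℝ^{m×n}, let (A,B) be a bimatrix game with A + B = M and Nash equilibrium (x,y), write A = Â + 1γ1ᵀ + a1ᵀ + 1bᵀ in the normalized parameterization, and define C = Â + 1γ1ᵀ + c1ᵀ + 1dᵀ with c = ρ(Ay + x), d = σ(Bᵀx + y), where ρ(z) = z − 1(1ᵀz/m) and σ(w) = w − 1(1ᵀw/n). Then from (C, M−C) alone one can recover (A,B,x,y): applying the water-level decomposition of Lemma on c and d yields the same x, y, and the reconstruction formulas a = c − ρ(Ây + x), b = σ((M−Â)ᵀx + y) − d return the original A and B. In particular the map (A,B,x,y) ↦ (C, M−C) from the equilibrium correspondence E_M to the set of games with payoff sum M is injective. -/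
open Matrix

noncomputable def gammaOf {m n : ℕ} (A : Matrix (Fin m) (Fin n) ℝ) : ℝ :=
  (∑ i, ∑ j, A i j) / ((m : ℝ) * (n : ℝ))

noncomputable def aVec {m n : ℕ} (A : Matrix (Fin m) (Fin n) ℝ) : Fin m → ℝ :=
  fun i => (∑ j, A i j) / (n : ℝ) - gammaOf A

noncomputable def bVec {m n : ℕ} (A : Matrix (Fin m) (Fin n) ℝ) : Fin n → ℝ :=
  fun j => (∑ i, A i j) / (m : ℝ) - gammaOf A

noncomputable def hatOf {m n : ℕ} (A : Matrix (Fin m) (Fin n) ℝ) :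
    Matrix (Fin m) (Fin n) ℝ :=
  Matrix.of fun i j => A i j - gammaOf A - aVec A i - bVec A j

noncomputable def rho {m : ℕ} (z : Fin m → ℝ) : Fin m → ℝ := fun i => z i - (∑ k, z k) / (m : ℝ)

noncomputable def sigma' {n : ℕ} (w : Fin n → ℝ) : Fin n → ℝ := fun j => w j - (∑ l, w l) / (n : ℝ)

noncomputable def cVec {m n : ℕ} (A : Matrix (Fin m) (Fin n) ℝ)
    (x : Fin m → ℝ) (y : Fin n → ℝ) : Fin m → ℝ :=
  rho (A.mulVec y + x)

noncomputable def dVec {m n : ℕ} (M A : Matrix (Fin m) (Fin n) ℝ)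
    (x : Fin m → ℝ) (y : Fin n → ℝ) : Fin n → ℝ :=
  sigma' ((M - A)ᵀ.mulVec x + y)

noncomputable def Cmap {m n : ℕ} (M A : Matrix (Fin m) (Fin n) ℝ)
    (x : Fin m → ℝ) (y : Fin n → ℝ) : Matrix (Fin m) (Fin n) ℝ :=
  Matrix.of fun i j => hatOf A i j + gammaOf A + cVec A x y i + dVec M A x y j

/-!
A Nash equilibrium strategy `x` is a best response to `A y`, so it is supported where `A y`, or
equivalently `c - x` (which is `A y` minus a constant), is maximal. This is the water-level
condition, and a probability vector satisfying it is determined by `c`. As `c` and `d` are centred,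
`(Â, γ, c, d)` is the normalized parameterization of `C`, so `C` determines `Â, γ, c, d` and
hence `x, y`. Finally, on a probability vector `Â y` differs from `A y` by `a` plus a constant,
which `ρ` removes; this reads off `a`, and `b` likewise.
-/

open Finset

section WaterLevel

variable {ι : Type*} [Fintype ι]

def IsWaterLevel (c x : ι → ℝ) : Prop :=
  ∀ i, x i = 0 ∨ ∀ k, c k - x k ≤ c i - x i

theorem IsWaterLevel.le_of_sum_eq {c x x' : ι → ℝ} (hx : IsWaterLevel c x)
    (hx' : IsWaterLevel c x') (h0 : ∀ i, 0 ≤ x i) (h0' : ∀ i, 0 ≤ x' i) (hsum : ∑ i, x i = ∑ i, x' i) :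
    x ≤ x' := by
  intro i
  by_contra! hi
  obtain ⟨j, hj⟩ : ∃ j, x j < x' j := by
    by_contra! hle
    exact hsum.not_gt (sum_lt_sum (fun j _ => hle j) ⟨i, mem_univ i, hi⟩)
  have hi_max := (hx i).resolve_left (by linarith [h0' i])
  have hj_max := (hx' j).resolve_left (by linarith [h0 j])
  linarith [hi_max j, hj_max i]

theorem IsWaterLevel.eq_of_sum_eq {c x x' : ι → ℝ} (hx : IsWaterLevel c x)
    (hx' : IsWaterLevel c x') (h0 : ∀ i, 0 ≤ x i) (h0' : ∀ i, 0 ≤ x' i) (hsum : ∑ i, x i = ∑ i, x' i) :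
    x = x' :=
  le_antisymm (hx.le_of_sum_eq hx' h0 h0' hsum) (hx'.le_of_sum_eq hx h0' h0 hsum.symm)

end WaterLevel

section BestResponse

variable {m : ℕ}

theorem ne_zero_of_mem_simplex {x : Fin m → ℝ} (hx : x ∈ simplex m) : m ≠ 0 := by
  rintro rfl
  simp [simplex] at hx

theorem le_of_bestResponse {w x : Fin m → ℝ} (hx : x ∈ simplex m)
    (hbest : ∀ x' ∈ simplex m, x' ⬝ᵥ w ≤ x ⬝ᵥ w) {i : Fin m} (hi : x i ≠ 0) (k : Fin m) :
    w k ≤ w i := by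
  have hle : ∀ l, w l ≤ x ⬝ᵥ w := fun l => by
    simpa [single_dotProduct] using hbest _ (single_mem_stdSimplex ℝ l)
  have hzero : ∑ l, x l * (x ⬝ᵥ w - w l) = 0 := by
    simp only [mul_sub, sum_sub_distrib, ← sum_mul, hx.2, one_mul, dotProduct, sub_self]
  have hterm := (sum_eq_zero_iff_of_nonneg fun l _ =>
    mul_nonneg (hx.1 l) (sub_nonneg.2 (hle l))).1 hzero i (mem_univ i)
  have := (mul_eq_zero.1 hterm).resolve_left hi
  linarith [hle k]

theorem isWaterLevel_rho_add_of_bestResponse {w x : Fin m → ℝ} (hx : x ∈ simplex m)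
    (hbest : ∀ x' ∈ simplex m, x' ⬝ᵥ w ≤ x ⬝ᵥ w) : IsWaterLevel (rho (w + x)) x := by
  refine fun i => or_iff_not_imp_left.2 fun hi k => ?_
  have := le_of_bestResponse hx hbest hi k
  simp only [rho, Pi.add_apply]
  linarith

end BestResponse

section Centring

variable {m : ℕ}

theorem sigma'_eq_rho (w : Fin m → ℝ) : sigma' w = rho w := rfl

theorem sum_rho (z : Fin m → ℝ) : ∑ i, rho z i = 0 := by
  rcases eq_or_ne m 0 with rfl | hm
  · simp
  simp only [rho, sum_sub_distrib, sum_const, card_univ, Fintype.card_fin, nsmul_eq_mul]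
  field_simp
  ring

theorem rho_add (z w : Fin m → ℝ) : rho (z + w) = rho z + rho w := by
  funext i
  simp only [rho, Pi.add_apply, sum_add_distrib]
  ring

theorem rho_sub (z w : Fin m → ℝ) : rho (z - w) = rho z - rho w := by
  funext i
  simp only [rho, Pi.sub_apply, sum_sub_distrib]
  ring

theorem rho_const (t : ℝ) : rho (fun _ : Fin m => t) = 0 := by
  funext i
  have hm : (m : ℝ) ≠ 0 := Nat.cast_ne_zero.2 (Fin.pos i).ne'
  simp only [rho, sum_const, card_univ, Fintype.card_fin, nsmul_eq_mul, Pi.zero_apply]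
  field_simp
  ring

theorem rho_of_sum_eq_zero {z : Fin m → ℝ} (hz : ∑ i, z i = 0) : rho z = z := by
  funext i
  simp [rho, hz]

end Centring

section NormalizedParameterization

variable {m n : ℕ}

theorem hatOf_apply_add (A : Matrix (Fin m) (Fin n) ℝ) (i : Fin m) (j : Fin n) :
    hatOf A i j + (gammaOf A + aVec A i + bVec A j) = A i j := by
  simp only [hatOf, of_apply]
  ring

theorem eq_of_normalizedParams_eq {A A' : Matrix (Fin m) (Fin n) ℝ}
    (hH : hatOf A = hatOf A') (hg : gammaOf A = gammaOf A') (ha : aVec A = aVec A')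
    (hb : bVec A = bVec A') : A = A' := by
  ext i j
  rw [← hatOf_apply_add A, ← hatOf_apply_add A', hH, hg, ha, hb]

theorem sum_aVec (A : Matrix (Fin m) (Fin n) ℝ) : ∑ i, aVec A i = 0 := by
  rcases eq_or_ne m 0 with rfl | hm
  · simp
  simp only [aVec, gammaOf, sum_sub_distrib, ← sum_div, sum_const, card_univ,
    Fintype.card_fin, nsmul_eq_mul]
  rcases eq_or_ne n 0 with rfl | hn
  · simp
  field_simp
  ring

theorem sum_bVec (A : Matrix (Fin m) (Fin n) ℝ) : ∑ j, bVec A j = 0 := by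
  rcases eq_or_ne n 0 with rfl | hn
  · simp
  simp only [bVec, gammaOf, sum_sub_distrib, ← sum_div, sum_const, card_univ,
    Fintype.card_fin, nsmul_eq_mul]
  rw [sum_comm]
  rcases eq_or_ne m 0 with rfl | hm
  · simp
  field_simp
  ring

theorem sum_hatOf_row (A : Matrix (Fin m) (Fin n) ℝ) (i : Fin m) : ∑ j, hatOf A i j = 0 := by
  rcases eq_or_ne n 0 with rfl | hn
  · simp
  simp only [hatOf, of_apply, sum_sub_distrib, sum_bVec, sum_const, card_univ,
    Fintype.card_fin, nsmul_eq_mul, aVec]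
  field_simp
  ring

theorem sum_hatOf_col (A : Matrix (Fin m) (Fin n) ℝ) (j : Fin n) : ∑ i, hatOf A i j = 0 := by
  rcases eq_or_ne m 0 with rfl | hm
  · simp
  simp only [hatOf, of_apply, sum_sub_distrib, sum_aVec, sum_const, card_univ,
    Fintype.card_fin, nsmul_eq_mul, bVec]
  field_simp
  ring

theorem normalizedParams_eq (hm : m ≠ 0) (hn : n ≠ 0) {H : Matrix (Fin m) (Fin n) ℝ} {g : ℝ}
    {c : Fin m → ℝ} {d : Fin n → ℝ} (hrow : ∀ i, ∑ j, H i j = 0) (hcol : ∀ j, ∑ i, H i j = 0)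
    (hc : ∑ i, c i = 0) (hd : ∑ j, d j = 0) :
    let X := of fun i j => H i j + g + c i + d j
    hatOf X = H ∧ gammaOf X = g ∧ aVec X = c ∧ bVec X = d := by
  intro X
  have hm' : (m : ℝ) ≠ 0 := Nat.cast_ne_zero.2 hm
  have hn' : (n : ℝ) ≠ 0 := Nat.cast_ne_zero.2 hn
  have hrowX : ∀ i, ∑ j, X i j = n * (g + c i) := fun i => by
    simp only [X, of_apply, sum_add_distrib, hrow, hd, sum_const, card_univ, Fintype.card_fin,
      nsmul_eq_mul]
    ring
  have hcolX : ∀ j, ∑ i, X i j = m * (g + d j) := fun j => by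
    simp only [X, of_apply, sum_add_distrib, hcol, hc, sum_const, card_univ, Fintype.card_fin,
      nsmul_eq_mul]
    ring
  have hg : gammaOf X = g := by
    simp only [gammaOf, hrowX, ← mul_sum, sum_add_distrib, hc, sum_const, card_univ,
      Fintype.card_fin, nsmul_eq_mul]
    field_simp
    ring
  have ha : aVec X = c := funext fun i => by
    simp only [aVec, hrowX, hg]
    field_simp
    ring
  have hb : bVec X = d := funext fun j => by
    simp only [bVec, hcolX, hg]
    field_simp
    ring
  refine ⟨?_, hg, ha, hb⟩
  ext i j
  simp only [hatOf, hg, ha, hb, X, of_apply]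
  ring

end NormalizedParameterization

section Recovery

variable {m n : ℕ}

theorem hatOf_mulVec (A : Matrix (Fin m) (Fin n) ℝ) {y : Fin n → ℝ} (hy : ∑ j, y j = 1) :
    hatOf A *ᵥ y = A *ᵥ y - aVec A - fun _ => gammaOf A + bVec A ⬝ᵥ y := by
  funext i
  have hA : ∀ j, A i j = hatOf A i j + (gammaOf A + aVec A i + bVec A j) := fun j =>
    (hatOf_apply_add A i j).symm
  simp only [mulVec, dotProduct, Pi.sub_apply, hA, add_mul, sum_add_distrib,
    ← mul_sum, hy]
  ring

theorem hatOf_transpose_mulVec (A : Matrix (Fin m) (Fin n) ℝ) {x : Fin m → ℝ}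
    (hx : ∑ i, x i = 1) :
    (hatOf A)ᵀ *ᵥ x = Aᵀ *ᵥ x - bVec A - fun _ => gammaOf A + aVec A ⬝ᵥ x := by
  funext j
  have hA : ∀ i, A i j = hatOf A i j + (gammaOf A + aVec A i + bVec A j) := fun i =>
    (hatOf_apply_add A i j).symm
  simp only [mulVec, dotProduct, transpose_apply, Pi.sub_apply, hA, add_mul, sum_add_distrib,
    ← mul_sum, hx]
  ring

theorem aVec_eq_cVec_sub (A : Matrix (Fin m) (Fin n) ℝ) (x : Fin m → ℝ) {y : Fin n → ℝ}
    (hy : ∑ j, y j = 1) : aVec A = cVec A x y - rho (hatOf A *ᵥ y + x) := by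
  have hshift : hatOf A *ᵥ y + x = (A *ᵥ y + x) - aVec A - fun _ => gammaOf A + bVec A ⬝ᵥ y := by
    rw [hatOf_mulVec A hy]
    abel
  rw [hshift, rho_sub, rho_sub, rho_const, rho_of_sum_eq_zero (sum_aVec A), cVec]
  abel

theorem bVec_eq_sub_dVec (M A : Matrix (Fin m) (Fin n) ℝ) {x : Fin m → ℝ} (y : Fin n → ℝ)
    (hx : ∑ i, x i = 1) : bVec A = sigma' ((M - hatOf A)ᵀ *ᵥ x + y) - dVec M A x y := by
  have hshift : (M - hatOf A)ᵀ *ᵥ x + y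
      = ((M - A)ᵀ *ᵥ x + y) + bVec A + fun _ => gammaOf A + aVec A ⬝ᵥ x := by
    rw [transpose_sub, transpose_sub, sub_mulVec, sub_mulVec, hatOf_transpose_mulVec A hx]
    abel
  rw [hshift, sigma'_eq_rho, rho_add, rho_add, rho_const, rho_of_sum_eq_zero (sum_bVec A), dVec,
    sigma'_eq_rho]
  abel

end Recovery

section Equilibrium

variable {m n : ℕ} {M A B : Matrix (Fin m) (Fin n) ℝ} {x : Fin m → ℝ} {y : Fin n → ℝ}

theorem isNash.isWaterLevel_cVec (hN : isNash A B x y) : IsWaterLevel (cVec A x y) x :=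
  isWaterLevel_rho_add_of_bestResponse hN.1 hN.2.2.1

theorem isNash.isWaterLevel_dVec (hAB : A + B = M) (hN : isNash A B x y) :
    IsWaterLevel (dVec M A x y) y := by
  refine isWaterLevel_rho_add_of_bestResponse hN.2.1 fun y' hy' => ?_
  have hdot : ∀ v, v ⬝ᵥ Bᵀ *ᵥ x = x ⬝ᵥ B *ᵥ v := fun v => by
    rw [mulVec_transpose, dotProduct_comm, dotProduct_mulVec]
  rw [← eq_sub_of_add_eq' hAB, hdot, hdot]
  exact hN.2.2.2 y' hy'

theorem normalizedParams_Cmap (hm : m ≠ 0) (hn : n ≠ 0) (M A : Matrix (Fin m) (Fin n) ℝ)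
    (x : Fin m → ℝ) (y : Fin n → ℝ) :
    hatOf (Cmap M A x y) = hatOf A ∧ gammaOf (Cmap M A x y) = gammaOf A ∧
      aVec (Cmap M A x y) = cVec A x y ∧ bVec (Cmap M A x y) = dVec M A x y :=
  normalizedParams_eq hm hn (sum_hatOf_row A) (sum_hatOf_col A) (sum_rho _) (sum_rho _)

theorem normalizedParams_eq_of_Cmap_eq (hm : m ≠ 0) (hn : n ≠ 0) {A' : Matrix (Fin m) (Fin n) ℝ}
    {x' : Fin m → ℝ} {y' : Fin n → ℝ} (hC : Cmap M A x y = Cmap M A' x' y') :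
    hatOf A = hatOf A' ∧ gammaOf A = gammaOf A' ∧ cVec A x y = cVec A' x' y' ∧
      dVec M A x y = dVec M A' x' y' := by
  obtain ⟨hH, hg, hc, hd⟩ := normalizedParams_Cmap hm hn M A x y
  obtain ⟨hH', hg', hc', hd'⟩ := normalizedParams_Cmap hm hn M A' x' y'
  rw [hC] at hH hg hc hd
  exact ⟨hH.symm.trans hH', hg.symm.trans hg', hc.symm.trans hc', hd.symm.trans hd'⟩

end Equilibrium

theorem stmt18_general {m n : ℕ} (M : Matrix (Fin m) (Fin n) ℝ) :
    (∀ (A B : Matrix (Fin m) (Fin n) ℝ) (x : Fin m → ℝ) (y : Fin n → ℝ),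
      A + B = M → isNash A B x y →
        (∀ i, x i = 0 ∨ ∀ k, cVec A x y k - x k ≤ cVec A x y i - x i) ∧
        (∀ j, y j = 0 ∨ ∀ l, dVec M A x y l - y l ≤ dVec M A x y j - y j) ∧
        aVec A = cVec A x y - rho ((hatOf A).mulVec y + x) ∧
        bVec A = sigma' ((M - hatOf A)ᵀ.mulVec x + y) - dVec M A x y) ∧
    (∀ (A B : Matrix (Fin m) (Fin n) ℝ) (x : Fin m → ℝ) (y : Fin n → ℝ)
       (A' B' : Matrix (Fin m) (Fin n) ℝ) (x' : Fin m → ℝ) (y' : Fin n → ℝ),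
      A + B = M → A' + B' = M → isNash A B x y → isNash A' B' x' y' →
      Cmap M A x y = Cmap M A' x' y' →
      A = A' ∧ B = B' ∧ x = x' ∧ y = y') := by
  have recover : ∀ (A B : Matrix (Fin m) (Fin n) ℝ) (x : Fin m → ℝ) (y : Fin n → ℝ),
      A + B = M → isNash A B x y →
        IsWaterLevel (cVec A x y) x ∧ IsWaterLevel (dVec M A x y) y ∧
        aVec A = cVec A x y - rho (hatOf A *ᵥ y + x) ∧
        bVec A = sigma' ((M - hatOf A)ᵀ *ᵥ x + y) - dVec M A x y :=
    fun A B x y hAB hN => ⟨hN.isWaterLevel_cVec, hN.isWaterLevel_dVec hAB,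
      aVec_eq_cVec_sub A x hN.2.1.2, bVec_eq_sub_dVec M A y hN.1.2⟩
  refine ⟨recover, fun A B x y A' B' x' y' hAB hAB' hN hN' hC => ?_⟩
  obtain ⟨hcx, hdy, ha, hb⟩ := recover A B x y hAB hN
  obtain ⟨hcx', hdy', ha', hb'⟩ := recover A' B' x' y' hAB' hN'
  obtain ⟨hH, hg, hc, hd⟩ := normalizedParams_eq_of_Cmap_eq
    (ne_zero_of_mem_simplex hN.1) (ne_zero_of_mem_simplex hN.2.1) hC
  have hx : x = x' :=
    hcx.eq_of_sum_eq (hc ▸ hcx') hN.1.1 hN'.1.1 (hN.1.2.trans hN'.1.2.symm)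
  have hy : y = y' :=
    hdy.eq_of_sum_eq (hd ▸ hdy') hN.2.1.1 hN'.2.1.1 (hN.2.1.2.trans hN'.2.1.2.symm)
  have hA : A = A' := eq_of_normalizedParams_eq hH hg
    (by rw [ha, ha', hc, hH, hx, hy]) (by rw [hb, hb', hd, hH, hx, hy])
  refine ⟨hA, ?_, hx, hy⟩
  rw [eq_sub_of_add_eq' hAB, eq_sub_of_add_eq' hAB', hA]

theorem stmt18 {m n : ℕ} (hm : 0 < m) (hn : 0 < n) (M : Matrix (Fin m) (Fin n) ℝ) :
    (∀ (A B : Matrix (Fin m) (Fin n) ℝ) (x : Fin m → ℝ) (y : Fin n → ℝ),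
      A + B = M → isNash A B x y →
        (∀ i, x i = 0 ∨ ∀ k, cVec A x y k - x k ≤ cVec A x y i - x i) ∧
        (∀ j, y j = 0 ∨ ∀ l, dVec M A x y l - y l ≤ dVec M A x y j - y j) ∧
        aVec A = cVec A x y - rho ((hatOf A).mulVec y + x) ∧
        bVec A = sigma' ((M - hatOf A)ᵀ.mulVec x + y) - dVec M A x y) ∧
    (∀ (A B : Matrix (Fin m) (Fin n) ℝ) (x : Fin m → ℝ) (y : Fin n → ℝ)
       (A' B' : Matrix (Fin m) (Fin n) ℝ) (x' : Fin m → ℝ) (y' : Fin n → ℝ),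
      A + B = M → A' + B' = M → isNash A B x y → isNash A' B' x' y' →
      Cmap M A x y = Cmap M A' x' y' →
      A = A' ∧ B = B' ∧ x = x' ∧ y = y') :=
  stmt18_general M
end

section
/- Let A, a, b define the rank-1 game (A, −A + abᵀ), and suppose λ̲ ≤ λ̄, (λ̲, x̲, y̲) and (λ̄, x̄, ȳ) both lie in the set N of equilibria of the parameterized zero-sum games, with λ̲ ≤ x̲ᵀa and x̄ᵀa ≤ λ̄. Then there exists (λ, x, y) ∈ N with λ ∈ [λ̲, λ̄] and xᵀa = λ; consequently the game (A, −A + abᵀ) has a Nash equilibrium. -/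
/-!
For every `λ` the zero-sum game with payoff `A - 1 λ bᵀ` has an equilibrium (von Neumann's
minimax theorem, in Sion's form). Hence `[λ̲, λ̄]` is covered by the sets of those `λ` admitting an
equilibrium with `λ ≤ xᵀa`, resp. with `xᵀa ≤ λ`; both are closed because the simplices are
compact, and they contain `λ̲`, resp. `λ̄`, so by connectedness of the interval they meet.
Equilibria of a zero-sum game are interchangeable and, for a fixed column strategy, the row
strategies in equilibrium form a convex set; at a common `λ` this set has points on both sides of
the hyperplane `xᵀa = λ`, hence one on it. Finally, when `xᵀa = λ` the row player's payoff in
`A - 1 λ bᵀ` differs from that in `A` by a constant, and the column player's payoff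
`x(-A + abᵀ)y'` equals `x(-A + 1 λ bᵀ)y'`, so the equilibrium is one of `(A, -A + abᵀ)`.
-/

open Matrix

def Nset {m n : ℕ} (A : Matrix (Fin m) (Fin n) ℝ) (b : Fin n → ℝ) :
    Set (ℝ × (Fin m → ℝ) × (Fin n → ℝ)) :=
  {t | isNash (A - Matrix.of fun _ j => t.1 * b j)
      (-A + Matrix.of fun _ j => t.1 * b j) t.2.1 t.2.2}

open Set

section ZeroSum

variable {m n : ℕ} {C : Matrix (Fin m) (Fin n) ℝ} {x x₁ x₂ : Fin m → ℝ} {y y₁ y₂ : Fin n → ℝ}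

-- `IsSaddlePointOn X Y f a b` minimises over its first argument: the column strategy comes first.
lemma isNash_neg_iff :
    isNash C (-C) x y ↔ x ∈ simplex m ∧ y ∈ simplex n ∧
      IsSaddlePointOn (simplex n) (simplex m) (fun y x ↦ x ⬝ᵥ C *ᵥ y) y x := by
  simp only [isNash, IsSaddlePointOn, neg_mulVec, dotProduct_neg, neg_le_neg_iff]
  refine and_congr_right fun hx ↦ and_congr_right fun hy ↦ ⟨?_, ?_⟩
  · rintro ⟨hmax, hmin⟩ y' hy' x' hx'
    exact (hmax x' hx').trans (hmin y' hy')
  · exact fun h ↦ ⟨fun x' hx' ↦ h y hy x' hx', fun y' hy' ↦ h y' hy' x hx⟩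

lemma convex_simplex (m : ℕ) : Convex ℝ (simplex m) := convex_stdSimplex ℝ (Fin m)

lemma isCompact_simplex (m : ℕ) : IsCompact (simplex m) := isCompact_stdSimplex ℝ (Fin m)

variable (C) in
lemma exists_isNash_neg (hm : (simplex m).Nonempty) (hn : (simplex n).Nonempty) :
    ∃ x y, isNash C (-C) x y := by
  have hlsc (x : Fin m → ℝ) : LowerSemicontinuousOn (fun y ↦ x ⬝ᵥ C *ᵥ y) (simplex n) :=
    (by fun_prop : Continuous fun y ↦ x ⬝ᵥ C *ᵥ y).lowerSemicontinuous.lowerSemicontinuousOn _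
  have hconvex (x : Fin m → ℝ) : ConvexOn ℝ (simplex n) (fun y ↦ x ⬝ᵥ C *ᵥ y) :=
    ((dotProductBilin ℝ ℝ x).comp C.mulVecLin).convexOn (convex_simplex n)
  have husc (y : Fin n → ℝ) : UpperSemicontinuousOn (fun x ↦ x ⬝ᵥ C *ᵥ y) (simplex m) :=
    (by fun_prop : Continuous fun x ↦ x ⬝ᵥ C *ᵥ y).upperSemicontinuous.upperSemicontinuousOn _
  have hconcave (y : Fin n → ℝ) : ConcaveOn ℝ (simplex m) (fun x ↦ x ⬝ᵥ C *ᵥ y) :=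
    ((dotProductBilin ℝ ℝ).flip (C *ᵥ y)).concaveOn (convex_simplex m)
  obtain ⟨y, hy, x, hx, h⟩ := Sion.exists_isSaddlePointOn
    hn (convex_simplex n) (isCompact_simplex n) (fun x _ ↦ hlsc x)
    (fun x _ ↦ (hconvex x).quasiconvexOn) (convex_simplex m) hm (isCompact_simplex m)
    (fun y _ ↦ husc y) (fun y _ ↦ (hconcave y).quasiconcaveOn)
  exact ⟨x, y, isNash_neg_iff.2 ⟨hx, hy, h⟩⟩

lemma isNash_neg_exchange (h₁ : isNash C (-C) x₁ y₁) (h₂ : isNash C (-C) x₂ y₂) :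
    isNash C (-C) x₂ y₁ := by
  rw [isNash_neg_iff] at *
  exact ⟨h₂.1, h₁.2.1, h₁.2.2.swap_left h₂.2.1 h₁.1 h₂.2.2⟩

variable (C) in
lemma convex_setOf_isNash_neg (y : Fin n → ℝ) : Convex ℝ {x | isNash C (-C) x y} := by
  intro x₁ h₁ x₂ h₂ s t hs ht hst
  simp only [mem_ofPred_eq, isNash_neg_iff] at *
  refine ⟨convex_simplex m h₁.1 h₂.1 hs ht hst, h₁.2.1, fun y' hy' x' hx' ↦ ?_⟩
  simp only [add_dotProduct, smul_dotProduct, smul_eq_mul]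
  calc x' ⬝ᵥ C *ᵥ y = s * (x' ⬝ᵥ C *ᵥ y) + t * (x' ⬝ᵥ C *ᵥ y) := by
        rw [← add_mul, hst, one_mul]
    _ ≤ s * (x₁ ⬝ᵥ C *ᵥ y') + t * (x₂ ⬝ᵥ C *ᵥ y') := by
        gcongr
        exacts [h₁.2.2 y' hy' x' hx', h₂.2.2 y' hy' x' hx']

lemma exists_isNash_neg_dotProduct_eq (a : Fin m → ℝ) {c : ℝ} (h₁ : isNash C (-C) x₁ y₁)
    (h₂ : isNash C (-C) x₂ y₂) (hc₁ : c ≤ x₁ ⬝ᵥ a) (hc₂ : x₂ ⬝ᵥ a ≤ c) :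
    ∃ x, isNash C (-C) x y₁ ∧ x ⬝ᵥ a = c :=
  (convex_setOf_isNash_neg C y₁).isPreconnected.intermediate_value (isNash_neg_exchange h₁ h₂) h₁
    (by fun_prop : Continuous (· ⬝ᵥ a)).continuousOn ⟨hc₂, hc₁⟩

end ZeroSum

section Nset

variable {m n : ℕ} (A : Matrix (Fin m) (Fin n) ℝ) (b : Fin n → ℝ)

lemma mem_Nset_iff {lam : ℝ} {x : Fin m → ℝ} {y : Fin n → ℝ} :
    (lam, x, y) ∈ Nset A b ↔
      isNash (A - of fun _ j ↦ lam * b j) (-(A - of fun _ j ↦ lam * b j)) x y := by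
  rw [neg_sub, sub_eq_neg_add _ A]
  rfl

lemma isClosed_Nset : IsClosed (Nset A b) := by
  simp only [Nset, isNash, ofPred_and, ofPred_forall]
  refine .inter (isClosed_stdSimplex ℝ (Fin m) |>.preimage (by fun_prop)) <|
    .inter (isClosed_stdSimplex ℝ (Fin n) |>.preimage (by fun_prop)) <| .inter ?_ ?_ <;>
  exact isClosed_iInter fun _ ↦ isClosed_iInter fun _ ↦ isClosed_le (by fun_prop) (by fun_prop)

lemma isCompact_Nset_inter_Icc (l u : ℝ) : IsCompact (Nset A b ∩ Prod.fst ⁻¹' Icc l u) :=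
  (isCompact_Icc.prod ((isCompact_simplex m).prod (isCompact_simplex n))).of_isClosed_subset
    ((isClosed_Nset A b).inter (isClosed_Icc.preimage continuous_fst))
    fun _ ht ↦ ⟨ht.2, ht.1.1, ht.1.2.1⟩

lemma exists_mem_Nset (hm : (simplex m).Nonempty) (hn : (simplex n).Nonempty) (lam : ℝ) :
    ∃ x y, (lam, x, y) ∈ Nset A b := by
  simpa only [mem_Nset_iff] using exists_isNash_neg (A - of fun _ j ↦ lam * b j) hm hn

variable {A b}

lemma isNash_of_mem_Nset_of_dotProduct_eq {a : Fin m → ℝ} {lam : ℝ} {x : Fin m → ℝ}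
    {y : Fin n → ℝ} (h : (lam, x, y) ∈ Nset A b) (ha : x ⬝ᵥ a = lam) :
    isNash A (-A + vecMulVec a b) x y := by
  have hrow : ∀ x' ∈ simplex m, x' ᵥ* of (fun _ j ↦ lam * b j) = lam • b := fun x' hx' ↦ by
    ext j
    simp [vecMul, dotProduct, ← Finset.sum_mul, hx'.2]
  obtain ⟨hx, hy, hmax, hmin⟩ := h
  refine ⟨hx, hy, fun x' hx' ↦ ?_, fun y' hy' ↦ ?_⟩
  · have := hmax x' hx'
    simp only [sub_mulVec, dotProduct_sub, dotProduct_mulVec, hrow x' hx', hrow x hx] at this ⊢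
    linarith
  · have := hmin y' hy'
    simpa only [add_mulVec, dotProduct_add, dotProduct_mulVec, vecMul_vecMulVec, ha, hrow x hx]
      using this

variable {a : Fin m → ℝ} {ll ul : ℝ} {xl xu : Fin m → ℝ} {yl yu : Fin n → ℝ}

lemma exists_mem_Nset_le_and_ge (hle : ll ≤ ul) (hl : (ll, xl, yl) ∈ Nset A b)
    (hla : ll ≤ xl ⬝ᵥ a) (hu : (ul, xu, yu) ∈ Nset A b) (hua : xu ⬝ᵥ a ≤ ul) :
    ∃ lam ∈ Icc ll ul, (∃ x y, (lam, x, y) ∈ Nset A b ∧ lam ≤ x ⬝ᵥ a) ∧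
      ∃ x y, (lam, x, y) ∈ Nset A b ∧ x ⬝ᵥ a ≤ lam := by
  have hK := isCompact_Nset_inter_Icc A b ll ul
  set L := Prod.fst '' (Nset A b ∩ Prod.fst ⁻¹' Icc ll ul ∩ {t | t.1 ≤ t.2.1 ⬝ᵥ a})
  set U := Prod.fst '' (Nset A b ∩ Prod.fst ⁻¹' Icc ll ul ∩ {t | t.2.1 ⬝ᵥ a ≤ t.1})
  have hL : IsClosed L :=
    ((hK.inter_right (isClosed_le (by fun_prop) (by fun_prop))).image continuous_fst).isClosed
  have hU : IsClosed U :=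
    ((hK.inter_right (isClosed_le (by fun_prop) (by fun_prop))).image continuous_fst).isClosed
  have hcover : Icc ll ul ⊆ L ∪ U := by
    intro lam hlam
    obtain ⟨x, y, h⟩ := exists_mem_Nset A b ⟨xl, hl.1⟩ ⟨yl, hl.2.1⟩ lam
    rcases le_total lam (x ⬝ᵥ a) with hxa | hxa
    exacts [.inl ⟨(lam, x, y), ⟨⟨h, hlam⟩, hxa⟩, rfl⟩, .inr ⟨(lam, x, y), ⟨⟨h, hlam⟩, hxa⟩, rfl⟩]
  obtain ⟨lam, hlam, ⟨⟨_, x₁, y₁⟩, ⟨⟨h₁, -⟩, hx₁⟩, rfl⟩, ⟨⟨_, x₂, y₂⟩, ⟨⟨h₂, -⟩, hx₂⟩, rfl⟩⟩ :=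
    isPreconnected_closed_iff.1 isPreconnected_Icc L U hL hU hcover
      ⟨ll, left_mem_Icc.2 hle, (ll, xl, yl), ⟨⟨hl, left_mem_Icc.2 hle⟩, hla⟩, rfl⟩
      ⟨ul, right_mem_Icc.2 hle, (ul, xu, yu), ⟨⟨hu, right_mem_Icc.2 hle⟩, hua⟩, rfl⟩
  exact ⟨_, hlam, ⟨x₁, y₁, h₁, hx₁⟩, x₂, y₂, h₂, hx₂⟩

end Nset

theorem stmt19 {m n : ℕ} (A : Matrix (Fin m) (Fin n) ℝ)
    (a : Fin m → ℝ) (b : Fin n → ℝ) (ll ul : ℝ)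
    (xl xu : Fin m → ℝ) (yl yu : Fin n → ℝ)
    (hle : ll ≤ ul)
    (h1 : (ll, xl, yl) ∈ Nset A b) (h2 : ll ≤ xl ⬝ᵥ a)
    (h3 : (ul, xu, yu) ∈ Nset A b) (h4 : xu ⬝ᵥ a ≤ ul) :
    (∃ (lam : ℝ) (x : Fin m → ℝ) (y : Fin n → ℝ),
      (lam, x, y) ∈ Nset A b ∧ ll ≤ lam ∧ lam ≤ ul ∧ x ⬝ᵥ a = lam) ∧
    ∃ (x : Fin m → ℝ) (y : Fin n → ℝ), isNash A (-A + vecMulVec a b) x y := by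
  obtain ⟨lam, ⟨hll, hul⟩, ⟨x₁, y₁, h₁, hx₁⟩, x₂, y₂, h₂, hx₂⟩ :=
    exists_mem_Nset_le_and_ge hle h1 h2 h3 h4
  rw [mem_Nset_iff] at h₁ h₂
  obtain ⟨x, hx, hxa⟩ := exists_isNash_neg_dotProduct_eq a h₁ h₂ hx₁ hx₂
  rw [← mem_Nset_iff] at hx
  exact ⟨⟨lam, x, y₁, hx, hll, hul, hxa⟩, x, y₁, isNash_of_mem_Nset_of_dotProduct_eq hx hxa⟩
end
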